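/- arXiv:2201.05588 — 3 statements merged into one kernel-verified Lean document; each statement's English description precedes it below -/
import Mathlib

section
/- Let N = (P,T,F) be a nonredundant workflow net. Suppose N is strongly i-sound for all 1 ≤ i < k but not strongly k-sound. If c is a constant such that every natural solution μ of ILP_N admits a natural solution ν ≤ μ with ν componentwise at most c and A·ν ≤ A·μ (A the matrix of ILP_N), then k ≤ c. -/
/-- A Petri net over places `P` and transitions `T`, given by pre/post arc weights. -/
structure PetriNet (P T : Type) where
  pre : T → P → ℕ
  post : T → P → ℕ

namespace PetriNet

variable {P T : Type}

/-- Transition `t` is enabled in marking `m`. -/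
def Enabled (N : PetriNet P T) (m : P → ℕ) (t : T) : Prop := ∀ p, N.pre t p ≤ m p

/-- Firing transition `t` in `m` yields `m'`. -/
def Fire (N : PetriNet P T) (m : P → ℕ) (t : T) (m' : P → ℕ) : Prop :=
  N.Enabled m t ∧ ∀ p, m' p = m p - N.pre t p + N.post t p

def Step (N : PetriNet P T) (m m' : P → ℕ) : Prop := ∃ t, N.Fire m t m'

/-- Reachability `m →* m'`. -/
def Reach (N : PetriNet P T) : (P → ℕ) → (P → ℕ) → Prop := Relation.ReflTransGen N.Step

/-- Effect of a transition, as an integer vector. -/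
def eff (N : PetriNet P T) (t : T) (p : P) : ℤ := (N.post t p : ℤ) - (N.pre t p : ℤ)

def ZStep (N : PetriNet P T) (m m' : P → ℤ) : Prop := ∃ t, ∀ p, m' p = m p + N.eff t p

/-- Z-reachability: no enabledness constraint, markings range over ℤ. -/
def ZReach (N : PetriNet P T) : (P → ℤ) → (P → ℤ) → Prop := Relation.ReflTransGen N.ZStep

/-- Maximal arc weight `‖T‖`. -/
def maxW (N : PetriNet P T) [Fintype P] [Fintype T] : ℕ :=
  Finset.univ.sup fun t => Finset.univ.sup fun p => max (N.pre t p) (N.post t p)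

/-- Edge relation of the underlying graph, on `P ⊕ T`. -/
def Edge (N : PetriNet P T) : (P ⊕ T) → (P ⊕ T) → Prop
  | Sum.inl p, Sum.inr t => 0 < N.pre t p
  | Sum.inr t, Sum.inl p => 0 < N.post t p
  | _, _ => False

/-- `N` is bounded from marking `m`. -/
def BoundedFrom (N : PetriNet P T) (m : P → ℕ) : Prop :=
  ∃ b : ℕ, ∀ m', N.Reach m m' → ∀ p, m' p ≤ b

/-- `N` is cyclic from marking `m`. -/
def CyclicFrom (N : PetriNet P T) (m : P → ℕ) : Prop :=
  ∀ m', N.Reach m m' → N.Reach m' m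

/-- Transition `t` is quasi-live from `m`. -/
def QuasiLiveT (N : PetriNet P T) (m : P → ℕ) (t : T) : Prop :=
  ∃ m', N.Reach m m' ∧ N.Enabled m' t

/-- `N` is quasi-live from `m`. -/
def QuasiLiveFrom (N : PetriNet P T) (m : P → ℕ) : Prop :=
  ∀ t, N.QuasiLiveT m t

/-- Transition `t` is live from `m`. -/
def LiveT (N : PetriNet P T) (m : P → ℕ) (t : T) : Prop :=
  ∀ m', N.Reach m m' → N.QuasiLiveT m' t

end PetriNet

/-- A workflow net: a Petri net with initial place `ini`, final place `fin`,
no production into `ini`, no consumption from `fin`, and every node on a path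
from `ini` to `fin` in the underlying graph. -/
structure WorkflowNet (P T : Type) extends PetriNet P T where
  ini : P
  fin : P
  ini_ne_fin : ini ≠ fin
  no_prod_ini : ∀ t, post t ini = 0
  no_cons_fin : ∀ t, pre t fin = 0
  on_path : ∀ v : P ⊕ T,
    Relation.ReflTransGen toPetriNet.Edge (Sum.inl ini) v ∧
    Relation.ReflTransGen toPetriNet.Edge v (Sum.inl fin)

namespace WorkflowNet

variable {P T : Type}

/-- The marking `{i : k}`. -/
def iniM [DecidableEq P] (N : WorkflowNet P T) (k : ℕ) : P → ℕ :=
  fun p => if p = N.ini then k else 0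

/-- The marking `{f : k}`. -/
def finM [DecidableEq P] (N : WorkflowNet P T) (k : ℕ) : P → ℕ :=
  fun p => if p = N.fin then k else 0

/-- `N` is `k`-sound. -/
def KSound [DecidableEq P] (N : WorkflowNet P T) (k : ℕ) : Prop :=
  ∀ m, N.toPetriNet.Reach (N.iniM k) m → N.toPetriNet.Reach m (N.finM k)

/-- `N` is generalised sound. -/
def GeneralisedSound [DecidableEq P] (N : WorkflowNet P T) : Prop :=
  ∀ k : ℕ, 1 ≤ k → N.KSound k

/-- `N` is structurally sound. -/
def StructurallySound [DecidableEq P] (N : WorkflowNet P T) : Prop :=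
  ∃ k : ℕ, 1 ≤ k ∧ N.KSound k

/-- All places of `N` are nonredundant. -/
def Nonredundant [DecidableEq P] (N : WorkflowNet P T) : Prop :=
  ∀ p : P, ∃ (k : ℕ) (m : P → ℕ), N.toPetriNet.Reach (N.iniM k) m ∧ 0 < m p

/-- `N` is strongly `k`-sound. -/
def StronglyKSound [DecidableEq P] (N : WorkflowNet P T) (k : ℕ) : Prop :=
  ∀ m : P → ℕ,
    N.toPetriNet.ZReach (fun p => ((N.iniM k) p : ℤ)) (fun p => (m p : ℤ)) →
    N.toPetriNet.Reach m (N.finM k)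

end WorkflowNet

section ILPN

variable {P T : Type} [DecidableEq P] [Fintype P] [Fintype T]

/-- `(κ, τ)` is a natural solution of ILP_N. -/
def IsSolILP (N : WorkflowNet P T) (κ : ℕ) (τ : T → ℕ) : Prop :=
  1 ≤ κ ∧
  0 ≤ (κ : ℤ) + ∑ t, (τ t : ℤ) * N.toPetriNet.eff t N.ini ∧
  ∀ p : P, p ≠ N.ini → 0 ≤ ∑ t, (τ t : ℤ) * N.toPetriNet.eff t p

end ILPN

/-! If `k > c`, a marking `m = M(k, τ)` witnessing strong `k`-unsoundness splits, via a small
solution `(κ', τ') ≤ (k, τ)` with `M(κ', τ') ≤ M(k, τ)`, into the natural markings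
`M(κ', τ')` and `M(k - κ', τ - τ')` of two solutions with `1 ≤ κ', k - κ' < k`. By strong
soundness below `k` these reach `{f : κ'}` and `{f : k - κ'}`, and reachability is additive,
so `m` reaches `{f : k}`. -/

namespace PetriNet

variable {P T : Type} {N : PetriNet P T}

theorem Fire.add_right {a b : P → ℕ} {t : T} (h : N.Fire a t b) (d : P → ℕ) :
    N.Fire (a + d) t (b + d) := by
  obtain ⟨hen, hb⟩ := h
  refine ⟨fun p => (hen p).trans (Nat.le_add_right _ _), fun p => ?_⟩
  have := hen p
  have := hb p
  simp only [Pi.add_apply]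
  omega

theorem Reach.add_right {a b : P → ℕ} (h : N.Reach a b) (d : P → ℕ) :
    N.Reach (a + d) (b + d) := by
  induction h with
  | refl => exact .refl
  | tail _ hstep ih =>
    obtain ⟨t, hfire⟩ := hstep
    exact ih.tail ⟨t, hfire.add_right d⟩

theorem Reach.add {a b c d : P → ℕ} (hab : N.Reach a b) (hcd : N.Reach c d) :
    N.Reach (a + c) (b + d) := by
  have hcd' : N.Reach (b + c) (b + d) := by
    rw [add_comm b c, add_comm b d]
    exact hcd.add_right b
  exact Relation.ReflTransGen.trans (hab.add_right c) hcd'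

theorem zreach_add_nsmul_eff (x : P → ℤ) (t : T) (n : ℕ) : N.ZReach x (x + n • N.eff t) := by
  induction n with
  | zero =>
    rw [zero_smul, add_zero]
    exact .refl
  | succ n ih => exact ih.tail ⟨t, fun p => by simp only [succ_nsmul, Pi.add_apply, add_assoc]⟩

section Parikh

variable [Fintype T]

def parikhEff (N : PetriNet P T) (τ : T → ℕ) : P → ℤ := ∑ t, τ t • N.eff t

theorem parikhEff_apply (τ : T → ℕ) (p : P) :
    N.parikhEff τ p = ∑ t, (τ t : ℤ) * N.eff t p := by
  simp [parikhEff, Finset.sum_apply, nsmul_eq_mul]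

theorem parikhEff_zero : N.parikhEff 0 = 0 := by
  simp [parikhEff]

theorem parikhEff_add (τ₁ τ₂ : T → ℕ) :
    N.parikhEff (τ₁ + τ₂) = N.parikhEff τ₁ + N.parikhEff τ₂ := by
  simp only [parikhEff, Pi.add_apply, add_nsmul, Finset.sum_add_distrib]

theorem parikhEff_single [DecidableEq T] (t : T) : N.parikhEff (Pi.single t 1) = N.eff t := by
  simp [parikhEff, Pi.single_apply]

theorem zreach_add_parikhEff (x : P → ℤ) (τ : T → ℕ) : N.ZReach x (x + N.parikhEff τ) := by
  classical
  suffices ∀ s : Finset T, N.ZReach x (x + ∑ t ∈ s, τ t • N.eff t) from this Finset.univ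
  intro s
  induction s using Finset.induction_on with
  | empty =>
    rw [Finset.sum_empty, add_zero]
    exact .refl
  | insert t s ht ih =>
    rw [Finset.sum_insert ht, add_comm (τ t • _), ← add_assoc]
    exact ih.trans (zreach_add_nsmul_eff _ t _)

theorem zreach_iff {x y : P → ℤ} : N.ZReach x y ↔ ∃ τ : T → ℕ, y = x + N.parikhEff τ := by
  classical
  refine ⟨fun h => ?_, fun ⟨τ, hy⟩ => hy ▸ zreach_add_parikhEff x τ⟩
  induction h with
  | refl => exact ⟨0, by simp [parikhEff_zero]⟩
  | tail _ hstep ih =>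
    obtain ⟨τ, rfl⟩ := ih
    obtain ⟨t, ht⟩ := hstep
    refine ⟨τ + Pi.single t 1, funext fun p => ?_⟩
    simp [ht p, parikhEff_add, parikhEff_single, add_assoc]

end Parikh

end PetriNet

namespace WorkflowNet

open PetriNet

variable {P T : Type} [DecidableEq P] {N : WorkflowNet P T}

theorem iniM_add (a b : ℕ) : N.iniM (a + b) = N.iniM a + N.iniM b := by
  ext p
  by_cases hp : p = N.ini <;> simp [iniM, hp]

theorem finM_add (a b : ℕ) : N.finM (a + b) = N.finM a + N.finM b := by
  ext p
  by_cases hp : p = N.fin <;> simp [finM, hp]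

variable [Fintype T]

/-- The marking `M(μ)` of the paper, for `μ = (κ, τ)`. -/
def ilpMarking (N : WorkflowNet P T) (κ : ℕ) (τ : T → ℕ) : P → ℤ :=
  (fun p => (N.iniM κ p : ℤ)) + N.parikhEff τ

theorem ilpMarking_add (κ₁ κ₂ : ℕ) (τ₁ τ₂ : T → ℕ) :
    N.ilpMarking (κ₁ + κ₂) (τ₁ + τ₂) = N.ilpMarking κ₁ τ₁ + N.ilpMarking κ₂ τ₂ := by
  ext p
  simp only [ilpMarking, Pi.add_apply, iniM_add, Nat.cast_add, parikhEff_add]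
  ring

theorem ilpMarking_le_ilpMarking_iff {κ κ' : ℕ} {τ τ' : T → ℕ} :
    N.ilpMarking κ' τ' ≤ N.ilpMarking κ τ ↔
      ((κ' : ℤ) + ∑ t, (τ' t : ℤ) * N.eff t N.ini ≤ κ + ∑ t, (τ t : ℤ) * N.eff t N.ini) ∧
      ∀ p, p ≠ N.ini → ∑ t, (τ' t : ℤ) * N.eff t p ≤ ∑ t, (τ t : ℤ) * N.eff t p := by
  refine ⟨fun h => ⟨?_, fun p hp => ?_⟩, fun ⟨hini, hrest⟩ p => ?_⟩
  · simpa [ilpMarking, iniM, parikhEff_apply] using h N.ini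
  · simpa [ilpMarking, iniM, parikhEff_apply, hp] using h p
  · by_cases hp : p = N.ini
    · subst hp
      simpa [ilpMarking, iniM, parikhEff_apply] using hini
    · simpa [ilpMarking, iniM, parikhEff_apply, hp] using hrest p hp

theorem StronglyKSound.reach_finM {κ : ℕ} (hs : N.StronglyKSound κ) {τ : T → ℕ} {m : P → ℕ}
    (hm : (fun p => (m p : ℤ)) = N.ilpMarking κ τ) : N.Reach m (N.finM κ) :=
  hs m (hm ▸ N.zreach_iff.mpr ⟨τ, rfl⟩)

theorem isSolILP_iff {κ : ℕ} {τ : T → ℕ} : IsSolILP N κ τ ↔ 1 ≤ κ ∧ 0 ≤ N.ilpMarking κ τ := by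
  have h0 : N.ilpMarking 0 0 = 0 := by ext p; simp [ilpMarking, iniM, parikhEff_zero]
  rw [← h0, ilpMarking_le_ilpMarking_iff]
  simp [IsSolILP]

theorem isSolILP_tsub {κ κ' : ℕ} {τ τ' : T → ℕ} (hκ : κ' < κ)
    (hτ : τ' ≤ τ) (hM : N.ilpMarking κ' τ' ≤ N.ilpMarking κ τ) :
    IsSolILP N (κ - κ') (τ - τ') := by
  rw [isSolILP_iff]
  refine ⟨by omega, ?_⟩
  have hsplit := N.ilpMarking_add κ' (κ - κ') τ' (τ - τ')
  rw [add_tsub_cancel_of_le hκ.le, add_tsub_cancel_of_le hτ] at hsplit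
  rw [hsplit] at hM
  exact le_add_iff_nonneg_right _ |>.mp hM

theorem exists_natCast_eq_ilpMarking {κ : ℕ} {τ : T → ℕ} (hsol : IsSolILP N κ τ) :
    ∃ m : P → ℕ, (fun p => (m p : ℤ)) = N.ilpMarking κ τ :=
  ⟨fun p => (N.ilpMarking κ τ p).toNat,
    funext fun p => Int.toNat_of_nonneg ((isSolILP_iff.mp hsol).2 p)⟩

theorem exists_isSolILP_of_zreach {k : ℕ} (hk : 1 ≤ k) {m : P → ℕ}
    (h : N.ZReach (fun p => (N.iniM k p : ℤ)) (fun p => (m p : ℤ))) :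
    ∃ τ, IsSolILP N k τ ∧ (fun p => (m p : ℤ)) = N.ilpMarking k τ := by
  obtain ⟨τ, hτ⟩ := zreach_iff.mp h
  have hm : (fun p => (m p : ℤ)) = N.ilpMarking k τ := hτ
  exact ⟨τ, isSolILP_iff.mpr ⟨hk, hm ▸ fun p => Int.natCast_nonneg (m p)⟩, hm⟩

theorem reach_finM_of_eq_ilpMarking_add {κ₁ κ₂ : ℕ} {τ₁ τ₂ : T → ℕ}
    (hs₁ : N.StronglyKSound κ₁) (hs₂ : N.StronglyKSound κ₂)
    (hsol₁ : IsSolILP N κ₁ τ₁) (hsol₂ : IsSolILP N κ₂ τ₂) {m : P → ℕ}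
    (hm : (fun p => (m p : ℤ)) = N.ilpMarking (κ₁ + κ₂) (τ₁ + τ₂)) :
    N.Reach m (N.finM (κ₁ + κ₂)) := by
  obtain ⟨m₁, hm₁⟩ := exists_natCast_eq_ilpMarking hsol₁
  obtain ⟨m₂, hm₂⟩ := exists_natCast_eq_ilpMarking hsol₂
  have hsplit : m = m₁ + m₂ := by
    ext p
    have h := congrFun hm p
    rw [ilpMarking_add, Pi.add_apply, ← congrFun hm₁ p, ← congrFun hm₂ p] at h
    exact_mod_cast h
  rw [hsplit, finM_add]
  exact (hs₁.reach_finM hm₁).add (hs₂.reach_finM hm₂)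

end WorkflowNet

section ILPN

variable {P T : Type} [DecidableEq P] [Fintype P] [Fintype T]

theorem first_unsound_small_general (N : WorkflowNet P T)
    (k : ℕ) (hbelow : ∀ i : ℕ, 1 ≤ i → i < k → N.StronglyKSound i)
    (hk : ¬ N.StronglyKSound k) (c : ℕ)
    (hc : ∀ (κ : ℕ) (τ : T → ℕ), IsSolILP N κ τ →
      ∃ (κ' : ℕ) (τ' : T → ℕ), IsSolILP N κ' τ' ∧
        κ' ≤ κ ∧ (∀ t, τ' t ≤ τ t) ∧ κ' ≤ c ∧ (∀ t, τ' t ≤ c) ∧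
        ((κ' : ℤ) + ∑ t, (τ' t : ℤ) * N.toPetriNet.eff t N.ini ≤
          (κ : ℤ) + ∑ t, (τ t : ℤ) * N.toPetriNet.eff t N.ini) ∧
        ∀ p : P, p ≠ N.ini →
          ∑ t, (τ' t : ℤ) * N.toPetriNet.eff t p ≤
            ∑ t, (τ t : ℤ) * N.toPetriNet.eff t p) :
    k ≤ c := by
  by_contra! hck
  simp only [WorkflowNet.StronglyKSound, not_forall] at hk
  obtain ⟨m, hzm, hnm⟩ := hk
  obtain ⟨τ, hsol, hm⟩ := N.exists_isSolILP_of_zreach (by omega) hzm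
  obtain ⟨κ', τ', hsol', -, hτ', hκ'c, -, hini, hrest⟩ := hc k τ hsol
  have hsol'' := N.isSolILP_tsub (by omega) hτ'
    (WorkflowNet.ilpMarking_le_ilpMarking_iff.mpr ⟨hini, hrest⟩)
  have hκ' : 1 ≤ κ' := hsol'.1
  have hk_split : κ' + (k - κ') = k := by omega
  apply hnm
  rw [← hk_split]
  refine N.reach_finM_of_eq_ilpMarking_add (hbelow κ' hκ' (by omega))
    (hbelow (k - κ') hsol''.1 (by omega)) hsol' hsol'' ?_
  rwa [hk_split, add_tsub_cancel_of_le (show τ' ≤ τ from hτ')]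

/-- The first strongly unsound number is bounded by the small-solution bound of
ILP_N. -/
theorem first_unsound_small (N : WorkflowNet P T) (hN : N.Nonredundant)
    (k : ℕ) (hbelow : ∀ i : ℕ, 1 ≤ i → i < k → N.StronglyKSound i)
    (hk : ¬ N.StronglyKSound k) (c : ℕ)
    (hc : ∀ (κ : ℕ) (τ : T → ℕ), IsSolILP N κ τ →
      ∃ (κ' : ℕ) (τ' : T → ℕ), IsSolILP N κ' τ' ∧
        κ' ≤ κ ∧ (∀ t, τ' t ≤ τ t) ∧ κ' ≤ c ∧ (∀ t, τ' t ≤ c) ∧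
        ((κ' : ℤ) + ∑ t, (τ' t : ℤ) * N.toPetriNet.eff t N.ini ≤
          (κ : ℤ) + ∑ t, (τ t : ℤ) * N.toPetriNet.eff t N.ini) ∧
        ∀ p : P, p ≠ N.ini →
          ∑ t, (τ' t : ℤ) * N.toPetriNet.eff t p ≤
            ∑ t, (τ t : ℤ) * N.toPetriNet.eff t p) :
    k ≤ c :=
  first_unsound_small_general N k hbelow hk c hc

end ILPN
end

section
/- Let N = (P,T,F) be a conservative Petri net with markings m, m' having equal total token count c. Construct the workflow net N' by adding places i, o, r and transitions: t_i (consumes {i:1}, produces {r:c}), t_m (consumes {r:c}, produces m), t_{m'} with pre(t_{m'}) = m' and post(t_{m'}) = {o:1}, and for each p ∈ P a transition t_p (consumes {p:1}, produces {r:1}). If N' is 1-sound, then m →* m' in N. -/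
section Conservative

variable {P T : Type} [DecidableEq P] [Fintype P]

/-- Pre-flow of the workflow net built from a conservative Petri net `N` with
source `m` and target `m'` of total token count `c`. Places: `inr 0 = i`,
`inr 1 = o`, `inr 2 = r`. Transitions: `inr (inl 0) = t_i`, `inr (inl 1) = t_m`,
`inr (inl 2) = t_{m'}`, `inr (inr p) = t_p`. -/
def consPre (N : PetriNet P T) (m m' : P → ℕ) (c : ℕ) :
    (T ⊕ (Fin 3 ⊕ P)) → (P ⊕ Fin 3) → ℕ
  | Sum.inl t, Sum.inl p => N.pre t p
  | Sum.inl _, Sum.inr _ => 0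
  | Sum.inr (Sum.inl j), Sum.inl p =>
      if j = 2 then m' p else 0                 -- t_{m'} consumes m'
  | Sum.inr (Sum.inl j), Sum.inr q =>
      if j = 0 then (if q = 0 then 1 else 0)    -- t_i consumes {i:1}
      else if j = 1 then (if q = 2 then c else 0)  -- t_m consumes {r:c}
      else 0
  | Sum.inr (Sum.inr p0), Sum.inl p => if p = p0 then 1 else 0  -- t_p consumes {p:1}
  | Sum.inr (Sum.inr _), Sum.inr _ => 0

/-- Post-flow of the same construction. -/
def consPost (N : PetriNet P T) (m m' : P → ℕ) (c : ℕ) :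
    (T ⊕ (Fin 3 ⊕ P)) → (P ⊕ Fin 3) → ℕ
  | Sum.inl t, Sum.inl p => N.post t p
  | Sum.inl _, Sum.inr _ => 0
  | Sum.inr (Sum.inl j), Sum.inl p =>
      if j = 1 then m p else 0                  -- t_m produces m
  | Sum.inr (Sum.inl j), Sum.inr q =>
      if j = 0 then (if q = 2 then c else 0)    -- t_i produces {r:c}
      else if j = 2 then (if q = 1 then 1 else 0)  -- t_{m'} produces {o:1}
      else 0
  | Sum.inr (Sum.inr _), Sum.inl _ => 0
  | Sum.inr (Sum.inr _), Sum.inr q => if q = 2 then 1 else 0  -- t_p produces {r:1}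

private lemma sum_add_eq_aux {a b f g : P → ℕ} (h : ∀ p, a p + f p = b p + g p) :
    (∑ p, a p) + ∑ p, f p = (∑ p, b p) + ∑ p, g p := by
  rw [← Finset.sum_add_distrib, ← Finset.sum_add_distrib]
  exact Finset.sum_congr rfl fun p _ => h p

private lemma reach_sum_eq_aux (N : PetriNet P T)
    (hcons : ∀ t, ∑ p, N.pre t p = ∑ p, N.post t p)
    {u u' : P → ℕ} (h : N.Reach u u') : ∑ p, u' p = ∑ p, u p := by
  induction h with
  | refl => rfl
  | @tail b c0 _ hstep ih =>
    obtain ⟨t, hen, hf⟩ := hstep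
    have h1 : ∀ p, c0 p + N.pre t p = b p + N.post t p := fun p => by
      have := hen p; rw [hf p]; omega
    have h2 := sum_add_eq_aux h1
    have := hcons t
    omega

private lemma eq_of_le_of_sum_le_aux {u v : P → ℕ} (hle : ∀ p, u p ≤ v p)
    (hs : ∑ p, v p ≤ ∑ p, u p) : ∀ p, v p = u p := by
  by_contra h
  push_neg at h
  obtain ⟨p, hp⟩ := h
  have hlt : u p < v p := lt_of_le_of_ne (hle p) (Ne.symm hp)
  have : ∑ p, u p < ∑ p, v p :=
    Finset.sum_lt_sum (fun i _ => hle i) ⟨p, Finset.mem_univ p, hlt⟩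
  omega

/-- If the workflow net built from a conservative Petri net is 1-sound, then
`m →* m'` in the original net. -/
theorem conservative_reach_of_one_sound (N : PetriNet P T)
    (hcons : ∀ t, ∑ p, N.pre t p = ∑ p, N.post t p)
    (m m' : P → ℕ) (c : ℕ) (hm : ∑ p, m p = c) (hm' : ∑ p, m' p = c)
    (N' : WorkflowNet (P ⊕ Fin 3) (T ⊕ (Fin 3 ⊕ P)))
    (hini : N'.ini = Sum.inr 0) (hfin : N'.fin = Sum.inr 1)
    (hpre : N'.pre = consPre N m m' c) (hpost : N'.post = consPost N m m' c)
    (hsound : N'.KSound 1) :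
    N.Reach m m' := by
  classical
  rcases Nat.eq_zero_or_pos c with hc0 | hc
  · -- degenerate case `c = 0`: then `m = m' = 0`.
    subst hc0
    have h1 : ∀ p, m p = 0 := fun p =>
      (Finset.sum_eq_zero_iff.mp hm) p (Finset.mem_univ p)
    have h2 : ∀ p, m' p = 0 := fun p =>
      (Finset.sum_eq_zero_iff.mp hm') p (Finset.mem_univ p)
    have he : m = m' := funext fun p => by rw [h1 p, h2 p]
    exact he ▸ Relation.ReflTransGen.refl
  -- main case `1 ≤ c`
  set NP := N'.toPetriNet with hNP
  -- the three distinguished markings of `N'`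
  set v1 : (P ⊕ Fin 3) → ℕ := Sum.elim m (fun _ => 0) with hv1
  set vr : (P ⊕ Fin 3) → ℕ :=
    Sum.elim (fun _ => 0) (fun j => if j = 2 then c else 0) with hvr
  set fin1 : (P ⊕ Fin 3) → ℕ := fun q => if q = Sum.inr 1 then 1 else 0 with hfin1
  -- `v1` is reachable from the initial marking: fire `t_i` then `t_m`
  have step1 : NP.Step (N'.iniM 1) vr := by
    refine ⟨Sum.inr (Sum.inl 0), ?_, ?_⟩
    · intro q
      rcases q with p | j <;>
        simp [hpre, consPre, WorkflowNet.iniM, hini, hvr]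
    · intro q
      rcases q with p | j <;>
        simp [hpre, hpost, consPre, consPost, WorkflowNet.iniM, hini, hvr]
  have step2 : NP.Step vr v1 := by
    refine ⟨Sum.inr (Sum.inl 1), ?_, ?_⟩
    · intro q
      rcases q with p | j <;> simp [hpre, consPre, hvr]
    · intro q
      rcases q with p | j <;>
        simp [hpre, hpost, consPre, consPost, hvr, hv1]
  have hv1reach : NP.Reach (N'.iniM 1) v1 :=
    (Relation.ReflTransGen.single step1).tail step2
  -- the invariant
  set Inv : ((P ⊕ Fin 3) → ℕ) → Prop := fun v =>
    (v (Sum.inr 0) = 0 ∧ v (Sum.inr 1) = 0 ∧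
      ∃ u, N.Reach m u ∧ (∀ p, v (Sum.inl p) ≤ u p) ∧
        v (Sum.inr 2) + ∑ p, v (Sum.inl p) = c)
    ∨ (v = fin1 ∧ N.Reach m m') with hInvDef
  have hsum_u : ∀ {u : P → ℕ}, N.Reach m u → ∑ p, u p = c := fun h =>
    (reach_sum_eq_aux N hcons h).trans hm
  -- the invariant is preserved by steps of `N'`
  have hpres : ∀ v v', Inv v → NP.Step v v' → Inv v' := by
    rintro v v' hInv ⟨t, hen, hf⟩
    have hen' : ∀ q, consPre N m m' c t q ≤ v q := by
      intro q; have := hen q; rwa [hpre] at this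
    have hf' : ∀ q, v' q = v q - consPre N m m' c t q + consPost N m m' c t q := by
      intro q; have := hf q; rwa [hpre, hpost] at this
    rcases hInv with ⟨hi0, ho0, u, hu, hle, hsum⟩ | ⟨hveq, hmm'⟩
    · have husum : ∑ p, u p = c := hsum_u hu
      rcases t with t0 | j | p0
      · -- an original transition of `N`
        left
        have hpre_le : ∀ p, N.pre t0 p ≤ v (Sum.inl p) := fun p => by
          have := hen' (Sum.inl p); simpa [consPre] using this
        have hstep : ∀ p, v' (Sum.inl p) + N.pre t0 p = v (Sum.inl p) + N.post t0 p := by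
          intro p
          have h1 := hf' (Sum.inl p)
          simp only [consPre, consPost] at h1
          have := hpre_le p
          omega
        refine ⟨?_, ?_, fun p => u p - N.pre t0 p + N.post t0 p, ?_, ?_, ?_⟩
        · have := hf' (Sum.inr 0); simpa [consPre, consPost, hi0] using this
        · have := hf' (Sum.inr 1); simpa [consPre, consPost, ho0] using this
        · exact hu.tail ⟨t0, fun p => (hpre_le p).trans (hle p), fun p => rfl⟩
        · intro p
          show v' (Sum.inl p) ≤ u p - N.pre t0 p + N.post t0 p
          have h1 := hf' (Sum.inl p)
          simp only [consPre, consPost] at h1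
          have := hpre_le p
          have := hle p
          omega
        · have hr : v' (Sum.inr 2) = v (Sum.inr 2) := by
            have := hf' (Sum.inr 2); simpa [consPre, consPost] using this
          have h2 := sum_add_eq_aux hstep
          have := hcons t0
          omega
      · -- the three new transitions
        fin_cases j
        · -- `t_i`: impossible, no token on `i`
          have := hen' (Sum.inr 0)
          simp [consPre, hi0] at this
        · -- `t_m`: everything is on `r`, fires to the embedding of `m`
          have hrge : c ≤ v (Sum.inr 2) := by
            have := hen' (Sum.inr 2); simpa [consPre] using this
          have hP0 : ∀ p, v (Sum.inl p) = 0 := by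
            have hz : ∑ p, v (Sum.inl p) = 0 := by omega
            exact fun p => (Finset.sum_eq_zero_iff.mp hz) p (Finset.mem_univ p)
          left
          refine ⟨?_, ?_, m, Relation.ReflTransGen.refl, ?_, ?_⟩
          · have := hf' (Sum.inr 0); simpa [consPre, consPost, hi0] using this
          · have := hf' (Sum.inr 1); simpa [consPre, consPost, ho0] using this
          · intro p
            have := hf' (Sum.inl p)
            simp [consPre, consPost, hP0 p] at this
            omega
          · have hr : v' (Sum.inr 2) = 0 := by
              have := hf' (Sum.inr 2)
              simp [consPre, consPost] at this
              omega
            have hP : ∀ p, v' (Sum.inl p) = m p := by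
              intro p
              have := hf' (Sum.inl p)
              simpa [consPre, consPost, hP0 p] using this
            rw [hr, Finset.sum_congr rfl fun p _ => hP p]
            simpa using hm
        · -- `t_{m'}`: only enabled at the embedding of `m'`, fires to `fin1`
          have hm'le : ∀ p, m' p ≤ v (Sum.inl p) := fun p => by
            have := hen' (Sum.inl p); simpa [consPre] using this
          have hsumge : c ≤ ∑ p, v (Sum.inl p) := by
            calc c = ∑ p, m' p := hm'.symm
            _ ≤ ∑ p, v (Sum.inl p) := Finset.sum_le_sum fun p _ => hm'le p
          have hveqm' : ∀ p, v (Sum.inl p) = m' p :=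
            eq_of_le_of_sum_le_aux hm'le (by omega)
          have hueq : ∀ p, u p = m' p := by
            have h1 : ∀ p, m' p ≤ u p := fun p => (hveqm' p) ▸ hle p
            have h2 : ∑ p, u p ≤ ∑ p, m' p := by omega
            exact eq_of_le_of_sum_le_aux h1 h2
          have hreach : N.Reach m m' := by
            have : u = m' := funext hueq
            exact this ▸ hu
          right
          refine ⟨funext fun q => ?_, hreach⟩
          have hr0 : v (Sum.inr 2) = 0 := by omega
          rcases q with p | jq
          · have := hf' (Sum.inl p)
            simp [consPre, consPost, hveqm' p] at this
            simp [this, hfin1]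
          · fin_cases jq
            · have := hf' (Sum.inr 0)
              simp [consPre, consPost, hi0] at this
              simp [this, hfin1]
            · have := hf' (Sum.inr 1)
              simp [consPre, consPost, ho0] at this
              simp [this, hfin1]
            · have := hf' (Sum.inr 2)
              simp [consPre, consPost, hr0] at this
              simp [this, hfin1]
      · -- `t_{p0}`: moves a token from `p0` to `r`
        left
        have h1le : 1 ≤ v (Sum.inl p0) := by
          have := hen' (Sum.inl p0); simpa [consPre] using this
        have hstep : ∀ p, v' (Sum.inl p) + (if p = p0 then 1 else 0)
            = v (Sum.inl p) + 0 := by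
          intro p
          have h1 := hf' (Sum.inl p)
          simp only [consPre, consPost] at h1
          by_cases hpp : p = p0 <;> simp [hpp] at h1 ⊢ <;> omega
        refine ⟨?_, ?_, u, hu, ?_, ?_⟩
        · have := hf' (Sum.inr 0); simpa [consPre, consPost, hi0] using this
        · have := hf' (Sum.inr 1); simpa [consPre, consPost, ho0] using this
        · intro p
          have h1 := hf' (Sum.inl p)
          simp only [consPre, consPost] at h1
          have := hle p
          omega
        · have hr : v' (Sum.inr 2) = v (Sum.inr 2) + 1 := by
            have := hf' (Sum.inr 2); simp [consPre, consPost] at this; omega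
          have h2 := sum_add_eq_aux hstep
          have h3 : ∑ p : P, (if p = p0 then (1:ℕ) else 0) = 1 := by
            simp [Finset.sum_ite_eq']
          have h4 : ∑ _p : P, (0 : ℕ) = 0 := by simp
          omega
    · -- absorbing case: `v = fin1`
      subst hveq
      have hfv : ∀ q, fin1 q = if q = Sum.inr 1 then 1 else 0 := fun q => rfl
      rcases t with t0 | j | p0
      · have hpre0 : ∀ p, N.pre t0 p = 0 := fun p => by
          have := hen' (Sum.inl p); simpa [consPre, hfv] using this
        have hpost0 : ∀ p, N.post t0 p = 0 := by
          have : ∑ p, N.post t0 p = 0 := by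
            rw [← hcons t0]; exact Finset.sum_eq_zero fun p _ => hpre0 p
          exact fun p => (Finset.sum_eq_zero_iff.mp this) p (Finset.mem_univ p)
        right
        refine ⟨funext fun q => ?_, hmm'⟩
        rcases q with p | jq
        · have := hf' (Sum.inl p)
          simpa [consPre, consPost, hpre0 p, hpost0 p] using this
        · have := hf' (Sum.inr jq)
          simpa [consPre, consPost] using this
      · fin_cases j
        · have := hen' (Sum.inr 0)
          simp [consPre, hfv] at this
        · have := hen' (Sum.inr 2)
          simp [consPre, hfv] at this
          omega
        · have hz : ∀ p, m' p = 0 := fun p => by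
            have := hen' (Sum.inl p); simpa [consPre, hfv] using this
          have : (0 : ℕ) = c := by
            rw [← hm']; exact (Finset.sum_eq_zero fun p _ => hz p).symm
          omega
      · have := hen' (Sum.inl p0)
        simp [consPre, hfv] at this
  -- run the invariant along the soundness run
  have hInv1 : Inv v1 := by
    left
    exact ⟨rfl, rfl, m, Relation.ReflTransGen.refl, fun p => le_rfl, by simpa [hv1] using hm⟩
  have hrun : NP.Reach v1 (N'.finM 1) := hsound v1 hv1reach
  have hInvFin : Inv (N'.finM 1) := by
    have hgen : ∀ w, NP.Reach v1 w → Inv w := by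
      intro w h
      induction h with
      | refl => exact hInv1
      | tail _ hs ih => exact hpres _ _ ih hs
    exact hgen _ hrun
  rcases hInvFin with ⟨_, ho, _⟩ | ⟨_, hmm'⟩
  · exfalso
    have : N'.finM 1 (Sum.inr 1) = 1 := by simp [WorkflowNet.finM, hfin]
    omega
  · exact hmm'

end Conservative
end

section
/- Let N be a workflow net with initial place i and final place f, and let N' be N extended with one new transition t with pre(t) = {i:2} and post(t) = {f:1}. Then N' is not k-sound for any k ≥ 2. Consequently, N' is structurally sound if and only if N is 1-sound. -/
/-!
The new transition `t` turns `{i:2}` into `{f:1}`, and every marking `{f:c}` is dead. For even `k`,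
firing `t` `k/2` times reaches the dead marking `{f:k/2}`. For odd `k = 2j+1 ≥ 3`, firing it `j` times
reaches `{i:1} + {f:j}`; tokens on `f` are never consumed, so `k`-soundness yields `{i:1} →* {f:j+1}`,
and `k` copies of this run reach the dead marking `{f:k(j+1)}`. From `{i:1}` no reachable marking
carries two tokens on `i`, so `t` never fires and `N'` behaves as `N`.
-/

namespace PetriNet

variable {P T : Type} {N : PetriNet P T} {m m' : P → ℕ}

theorem Reach.add_right_s17 (h : N.Reach m m') (c : P → ℕ) : N.Reach (m + c) (m' + c) := by
  induction h with
  | refl => exact .refl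
  | tail _ hstep ih =>
    obtain ⟨t, hen, hfire⟩ := hstep
    refine ih.tail ⟨t, fun p => (hen p).trans (Nat.le_add_right _ _), fun p => ?_⟩
    have := hen p
    have := hfire p
    simp only [Pi.add_apply]
    omega

theorem Reach.add_s17 {m₁ m₁' m₂ m₂' : P → ℕ} (h₁ : N.Reach m₁ m₁') (h₂ : N.Reach m₂ m₂') :
    N.Reach (m₁ + m₂) (m₁' + m₂') := by
  have h₂' := h₂.add_right_s17 m₁'
  rw [add_comm m₂, add_comm m₂'] at h₂'
  exact (h₁.add_right_s17 m₂).trans h₂'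

theorem Reach.nsmul (h : N.Reach m m') (j : ℕ) : N.Reach (j • m) (j • m') := by
  induction j with
  | zero => rw [zero_smul, zero_smul]; exact .refl
  | succ j ih => rw [succ_nsmul, succ_nsmul]; exact ih.add_s17 h

theorem Reach.eq_of_not_enabled (hdead : ∀ t, ¬ N.Enabled m t) (h : N.Reach m m') : m' = m := by
  rcases h.cases_head with rfl | ⟨_, ⟨t, hen, _⟩, _⟩
  · rfl
  · exact absurd hen (hdead t)

theorem Reach.apply_le_apply_of_post_eq_zero {p : P} (hp : ∀ t, N.post t p = 0)
    (h : N.Reach m m') : m' p ≤ m p := by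
  induction h with
  | refl => exact le_rfl
  | tail _ hstep ih =>
    obtain ⟨t, -, hfire⟩ := hstep
    rw [hfire p, hp t]
    omega

/-- Tokens that no transition can consume are carried along unchanged by every run. -/
theorem Reach.exists_eq_add_of_add {c : P → ℕ} (hc : ∀ t p, N.pre t p = 0 ∨ c p = 0)
    (h : N.Reach (m + c) m') : ∃ m'', m' = m'' + c ∧ N.Reach m m'' := by
  induction h with
  | refl => exact ⟨m, rfl, .refl⟩
  | tail _ hstep ih =>
    obtain ⟨m₁, rfl, hm₁⟩ := ih
    obtain ⟨t, hen, hfire⟩ := hstep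
    refine ⟨fun p => m₁ p - N.pre t p + N.post t p, funext fun p => ?_,
      hm₁.tail ⟨t, fun p => ?_, fun p => rfl⟩⟩ <;>
    · have := hen p
      have := hfire p
      simp only [Pi.add_apply] at *
      rcases hc t p with h | h <;> omega

theorem Reach.map {T' : Type} {N' : PetriNet P T'} (e : T → T')
    (hpre : ∀ t p, N'.pre (e t) p = N.pre t p) (hpost : ∀ t p, N'.post (e t) p = N.post t p)
    (h : N.Reach m m') : N'.Reach m m' :=
  Relation.ReflTransGen.mono (fun _ _ ⟨t, hen, hfire⟩ =>
    ⟨e t, fun p => (hpre t p).symm ▸ hen p, fun p => by rw [hfire, hpre, hpost]⟩) _ _ h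

/-- Nothing produces on `p`, so it stays below two tokens and no transition `inr u` ever fires. -/
theorem reach_iff_of_inr_blocked {U : Type} {N' : PetriNet P (T ⊕ U)} {p : P}
    (hpre : ∀ t q, N'.pre (.inl t) q = N.pre t q) (hpost : ∀ t q, N'.post (.inl t) q = N.post t q)
    (hblocked : ∀ u, 1 < N'.pre (.inr u) p) (hp : ∀ t, N'.post t p = 0) (hm : m p ≤ 1) :
    N'.Reach m m' ↔ N.Reach m m' := by
  refine ⟨fun h => ?_, Reach.map Sum.inl hpre hpost⟩
  induction h with
  | refl => exact .refl
  | tail hrun hstep ih =>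
    obtain ⟨t | u, hen, hfire⟩ := hstep
    · exact ih.tail ⟨t, fun q => hpre t q ▸ hen q, fun q => by rw [hfire, hpre, hpost]⟩
    · have := hen p
      have := Reach.apply_le_apply_of_post_eq_zero hp hrun
      have := hblocked u
      omega

end PetriNet

namespace WorkflowNet

variable {P T : Type}

theorem exists_pre_pos_ne_fin (W : WorkflowNet P T) (t : T) :
    ∃ p, p ≠ W.fin ∧ 0 < W.pre t p := by
  rcases (W.on_path (.inr t)).1.cases_tail with h | ⟨p | _, -, hedge⟩
  · cases h
  · have hpos : 0 < W.pre t p := hedge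
    exact ⟨p, fun hp => by rw [hp, W.no_cons_fin] at hpos; exact hpos.false, hpos⟩
  · exact hedge.elim

variable [DecidableEq P]

theorem iniM_add_s17 (W : WorkflowNet P T) (a b : ℕ) : W.iniM (a + b) = W.iniM a + W.iniM b := by
  funext p
  simp only [iniM, Pi.add_apply]
  split_ifs <;> rfl

theorem nsmul_iniM (W : WorkflowNet P T) (j a : ℕ) : j • W.iniM a = W.iniM (j * a) := by
  funext p
  simp only [iniM, Pi.smul_apply, smul_eq_mul]
  split_ifs <;> simp

theorem finM_add_s17 (W : WorkflowNet P T) (a b : ℕ) : W.finM (a + b) = W.finM a + W.finM b := by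
  funext p
  simp only [finM, Pi.add_apply]
  split_ifs <;> rfl

theorem nsmul_finM (W : WorkflowNet P T) (j a : ℕ) : j • W.finM a = W.finM (j * a) := by
  funext p
  simp only [finM, Pi.smul_apply, smul_eq_mul]
  split_ifs <;> simp

theorem finM_injective (W : WorkflowNet P T) : Function.Injective W.finM := fun a b h => by
  simpa [finM] using congrFun h W.fin

theorem pre_eq_zero_or_finM_eq_zero (W : WorkflowNet P T) (c : ℕ) (t : T) (p : P) :
    W.pre t p = 0 ∨ W.finM c p = 0 := by
  by_cases hp : p = W.fin
  · exact .inl (hp ▸ W.no_cons_fin t)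
  · exact .inr (if_neg hp)

theorem eq_finM_of_reach_finM (W : WorkflowNet P T) (c : ℕ) {m : P → ℕ}
    (h : W.Reach (W.finM c) m) : m = W.finM c :=
  h.eq_of_not_enabled fun t hen => by
    obtain ⟨p, hp, hpos⟩ := W.exists_pre_pos_ne_fin t
    have := hen p
    simp only [finM, if_neg hp] at this
    omega

theorem KSound.eq_of_reach_finM {W : WorkflowNet P T} {k c : ℕ} (hW : W.KSound k)
    (h : W.Reach (W.iniM k) (W.finM c)) : c = k :=
  (W.finM_injective (W.eq_finM_of_reach_finM c (hW _ h))).symm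

theorem not_kSound_of_pre_eq_iniM_two (W : WorkflowNet P T) (t : T)
    (hpre : ∀ p, W.pre t p = W.iniM 2 p) (hpost : ∀ p, W.post t p = W.finM 1 p) {k : ℕ}
    (hk : 2 ≤ k) : ¬ W.KSound k := by
  intro hW
  have hfire : W.Reach (W.iniM 2) (W.finM 1) :=
    .single ⟨t, fun p => (hpre p).le, fun p => by rw [hpre, hpost, Nat.sub_self, zero_add]⟩
  obtain ⟨j, rfl | rfl⟩ := Nat.even_or_odd' k
  · have hrun := hfire.nsmul j
    rw [nsmul_iniM, nsmul_finM, mul_comm] at hrun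
    have := hW.eq_of_reach_finM hrun
    omega
  · have hhalf : W.Reach (W.iniM (2 * j + 1)) (W.iniM 1 + W.finM j) := by
      have hrun := PetriNet.Reach.add_s17 (m₁ := W.iniM 1) .refl (hfire.nsmul j)
      rwa [nsmul_iniM, nsmul_finM, mul_one, ← iniM_add_s17, add_comm 1, mul_comm] at hrun
    obtain ⟨m, hm, hrun⟩ :=
      (hW _ hhalf).exists_eq_add_of_add (W.pre_eq_zero_or_finM_eq_zero j)
    obtain rfl : m = W.finM (j + 1) :=
      add_right_cancel (hm.symm.trans (by rw [← finM_add_s17]; ring_nf))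
    have hscaled := hrun.nsmul (2 * j + 1)
    rw [nsmul_iniM, nsmul_finM, mul_one] at hscaled
    have := (Nat.mul_eq_left (by omega)).1 (hW.eq_of_reach_finM hscaled)
    omega

theorem kSound_one_iff_of_inr_blocked {U : Type} (N : WorkflowNet P T)
    (N' : WorkflowNet P (T ⊕ U)) (hini : N'.ini = N.ini) (hfin : N'.fin = N.fin)
    (hpre : ∀ t p, N'.pre (.inl t) p = N.pre t p) (hpost : ∀ t p, N'.post (.inl t) p = N.post t p)
    (hblocked : ∀ u, 1 < N'.pre (.inr u) N.ini) : N'.KSound 1 ↔ N.KSound 1 := by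
  have hreach {m m' : P → ℕ} (hm : m N.ini ≤ 1) : N'.Reach m m' ↔ N.Reach m m' :=
    PetriNet.reach_iff_of_inr_blocked hpre hpost hblocked (hini ▸ N'.no_prod_ini) hm
  have hone : N.iniM 1 N.ini ≤ 1 := by simp [iniM]
  have hiniM : N'.iniM 1 = N.iniM 1 := by unfold iniM; rw [hini]
  have hfinM : N'.finM 1 = N.finM 1 := by unfold finM; rw [hfin]
  simp only [KSound, hiniM, hfinM]
  refine forall_congr' fun m => ?_
  rw [hreach hone]
  exact imp_congr_right fun hm =>
    hreach ((hm.apply_le_apply_of_post_eq_zero N.no_prod_ini).trans hone)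

end WorkflowNet

/-- Adding a transition consuming `{i:2}` and producing `{f:1}` makes the net
unsound for all `k ≥ 2`; hence the extended net is structurally sound iff the
original net is 1-sound. -/
theorem structural_hardness_gadget {P T : Type} [DecidableEq P]
    (N : WorkflowNet P T) (N' : WorkflowNet P (T ⊕ Unit))
    (hini : N'.ini = N.ini) (hfin : N'.fin = N.fin)
    (hpre : ∀ t p, N'.pre (Sum.inl t) p = N.pre t p)
    (hpost : ∀ t p, N'.post (Sum.inl t) p = N.post t p)
    (hpre' : ∀ p, N'.pre (Sum.inr ()) p = N.iniM 2 p)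
    (hpost' : ∀ p, N'.post (Sum.inr ()) p = N.finM 1 p) :
    (∀ k : ℕ, 2 ≤ k → ¬ N'.KSound k) ∧
    (N'.StructurallySound ↔ N.KSound 1) := by
  have hiniM : N'.iniM 2 = N.iniM 2 := by unfold WorkflowNet.iniM; rw [hini]
  have hfinM : N'.finM 1 = N.finM 1 := by unfold WorkflowNet.finM; rw [hfin]
  have hunsound (k : ℕ) : 2 ≤ k → ¬ N'.KSound k :=
    N'.not_kSound_of_pre_eq_iniM_two (.inr ()) (by simpa only [hiniM] using hpre')
      (by simpa only [hfinM] using hpost')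
  have hone : N'.KSound 1 ↔ N.KSound 1 :=
    N.kSound_one_iff_of_inr_blocked N' hini hfin hpre hpost fun _ => by
      simp [hpre', WorkflowNet.iniM]
  refine ⟨hunsound, fun ⟨k, hk, hsound⟩ => ?_, fun h => ⟨1, le_rfl, hone.2 h⟩⟩
  obtain rfl : k = 1 := by
    by_contra hk1
    exact hunsound k (by omega) hsound
  exact hone.1 hsound
end
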